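/- Let λ > 0, δ ∈ (0, 1/2), T > 0, and let β : [0,T] → ℝ be a continuous function with β(0) = 0 that is δ-Hölder continuous with constant M, i.e. |β(t) − β(s)| ≤ M|t−s|^δ for all 0 ≤ s ≤ t ≤ T. Define W(t) = λ ∫₀ᵗ e^{−λ(t−s)} (β(t) − β(s)) ds + e^{−λt} β(t). Then for all t ∈ [0,T], |W(t)| ≤ λ^{−δ} (Γ(δ+1) + δ^δ e^{−δ}) M. -/

import Mathlib

open MeasureTheory Set Real

/- Both terms of `W` are controlled by the Hölder bound at the endpoint `t`: the convolution term by
`λ M ∫₀^∞ u^δ e^{-λu} du = λ^{-δ} Γ(δ+1) M`, and the boundary term by `M t^δ e^{-λt}`, whose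
maximum over `t` is `λ^{-δ} δ^δ e^{-δ} M`, attained at `t = δ / λ`. -/

theorem rpow_mul_exp_neg_le {δ x : ℝ} (hδ : 0 < δ) (hx : 0 ≤ x) :
    x ^ δ * exp (-x) ≤ δ ^ δ * exp (-δ) := by
  have hlin : x / δ ≤ exp (x / δ - 1) := by linarith [add_one_le_exp (x / δ - 1)]
  calc x ^ δ * exp (-x) = δ ^ δ * (x / δ) ^ δ * exp (-x) := by
        rw [div_rpow hx hδ.le, mul_div_cancel₀ _ (rpow_pos_of_pos hδ δ).ne']
    _ ≤ δ ^ δ * exp (x / δ - 1) ^ δ * exp (-x) := by gcongr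
    _ = δ ^ δ * exp (-δ) := by
        rw [← exp_mul, mul_assoc, ← exp_add]
        congr 2
        field_simp
        ring

theorem rpow_mul_exp_neg_mul_le {δ r t : ℝ} (hδ : 0 < δ) (hr : 0 < r) (ht : 0 ≤ t) :
    t ^ δ * exp (-(r * t)) ≤ r ^ (-δ) * (δ ^ δ * exp (-δ)) := by
  have h := rpow_mul_exp_neg_le hδ (mul_nonneg hr.le ht)
  rw [mul_rpow hr.le ht, mul_assoc, ← le_div_iff₀' (rpow_pos_of_pos hr δ)] at h
  rwa [rpow_neg hr.le, inv_mul_eq_div]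

theorem intervalIntegral_rpow_mul_exp_neg_mul_le {s r t : ℝ} (hs : -1 < s) (hr : 0 < r)
    (ht : 0 ≤ t) :
    ∫ u in (0 : ℝ)..t, u ^ s * exp (-(r * u)) ≤ (1 / r) ^ (s + 1) * Gamma (s + 1) := by
  have hGamma := integral_rpow_mul_exp_neg_mul_Ioi (a := s + 1) (by linarith) hr
  rw [add_sub_cancel_right] at hGamma
  have hint : IntegrableOn (fun u : ℝ => u ^ s * exp (-(r * u))) (Ioi 0) := by
    simpa [rpow_one] using integrableOn_rpow_mul_exp_neg_mul_rpow hs one_pos hr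
  rw [← hGamma, intervalIntegral.integral_of_le ht]
  refine setIntegral_mono_set hint ?_ Ioc_subset_Ioi_self.eventuallyLE
  filter_upwards [ae_restrict_mem measurableSet_Ioi] with u (hu : 0 < u)
  positivity

theorem norm_intervalIntegral_exp_mul_sub_le {δ r M t : ℝ} {β : ℝ → ℝ} (hδ : 0 ≤ δ)
    (ht : 0 ≤ t) (hβ : ∀ s ∈ Ioc 0 t, |β t - β s| ≤ M * (t - s) ^ δ) :
    |∫ s in (0 : ℝ)..t, exp (-r * (t - s)) * (β t - β s)|
      ≤ M * ∫ u in (0 : ℝ)..t, u ^ δ * exp (-(r * u)) := by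
  have hcont : Continuous fun s : ℝ => (t - s) ^ δ :=
    (continuous_sub_left t).rpow_const fun _ => Or.inr hδ
  have hbound : IntervalIntegrable (fun s => exp (-r * (t - s)) * (M * (t - s) ^ δ)) volume 0 t :=
    Continuous.intervalIntegrable (by fun_prop) _ _
  calc |∫ s in (0 : ℝ)..t, exp (-r * (t - s)) * (β t - β s)|
      ≤ ∫ s in (0 : ℝ)..t, exp (-r * (t - s)) * (M * (t - s) ^ δ) := by
        rw [← norm_eq_abs]
        refine intervalIntegral.norm_integral_le_of_norm_le ht (.of_forall fun s hs => ?_) hbound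
        rw [norm_mul, norm_of_nonneg (exp_pos _).le]
        exact mul_le_mul_of_nonneg_left (hβ s hs) (exp_pos _).le
    _ = M * ∫ u in (0 : ℝ)..t, u ^ δ * exp (-(r * u)) := by
        rw [← intervalIntegral.integral_const_mul]
        simpa [mul_comm, mul_left_comm, mul_assoc] using
          intervalIntegral.integral_comp_sub_left
            (fun u => M * (u ^ δ * exp (-(r * u)))) (a := 0) (b := t) t

theorem stmt_0_general (lam δ T M : ℝ) (hlam : 0 < lam) (hδ : δ ∈ Set.Ioo (0:ℝ) (1/2))
    (hT : 0 < T) (β : ℝ → ℝ) (hβ0 : β 0 = 0)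
    (hHolder : ∀ s t : ℝ, 0 ≤ s → s ≤ t → t ≤ T → |β t - β s| ≤ M * (t - s) ^ δ)
    (W : ℝ → ℝ)
    (hW : ∀ t, W t =
      lam * (∫ s in (0:ℝ)..t, Real.exp (-lam * (t - s)) * (β t - β s))
        + Real.exp (-lam * t) * β t) :
    ∀ t ∈ Set.Icc (0:ℝ) T,
      |W t| ≤ lam ^ (-δ) * (Real.Gamma (δ + 1) + δ ^ δ * Real.exp (-δ)) * M := by
  rintro t ⟨ht0, htT⟩
  have hM : 0 ≤ M := by
    have h := (abs_nonneg _).trans (hHolder 0 T le_rfl hT.le le_rfl)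
    exact nonneg_of_mul_nonneg_left h (rpow_pos_of_pos (by linarith) δ)
  have hβt : |β t| ≤ M * t ^ δ := by simpa [hβ0] using hHolder 0 t le_rfl ht0 htT
  have hconv := norm_intervalIntegral_exp_mul_sub_le (r := lam) hδ.1.le ht0
    fun s hs => hHolder s t hs.1.le hs.2 htT
  have hGamma := intervalIntegral_rpow_mul_exp_neg_mul_le (s := δ) (by linarith [hδ.1]) hlam ht0
  have hboundary := rpow_mul_exp_neg_mul_le hδ.1 hlam ht0
  have hscale : lam * (1 / lam) ^ (δ + 1) = lam ^ (-δ) := by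
    rw [one_div, inv_rpow hlam.le, ← rpow_neg hlam.le, neg_add, rpow_add hlam, rpow_neg_one,
      mul_left_comm, mul_inv_cancel₀ hlam.ne', mul_one]
  have hβboundary : exp (-(lam * t)) * |β t| ≤ M * (t ^ δ * exp (-(lam * t))) :=
    (mul_le_mul_of_nonneg_left hβt (exp_pos _).le).trans_eq (by ring)
  rw [hW t]
  calc _ ≤ lam * |∫ s in (0:ℝ)..t, exp (-lam * (t - s)) * (β t - β s)|
        + exp (-lam * t) * |β t| := by
        refine (abs_add_le _ _).trans_eq ?_
        rw [abs_mul, abs_mul, abs_of_pos hlam, abs_of_pos (exp_pos _)]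
    _ ≤ lam * (M * ((1 / lam) ^ (δ + 1) * Gamma (δ + 1)))
        + M * (t ^ δ * exp (-(lam * t))) := by
        rw [neg_mul lam t]
        gcongr
        exact hconv.trans (by gcongr)
    _ ≤ lam * (M * ((1 / lam) ^ (δ + 1) * Gamma (δ + 1)))
        + M * (lam ^ (-δ) * (δ ^ δ * exp (-δ))) := by gcongr
    _ = _ := by rw [← hscale]; ring

theorem stmt_0 (lam δ T M : ℝ) (hlam : 0 < lam) (hδ : δ ∈ Set.Ioo (0:ℝ) (1/2))
    (hT : 0 < T) (β : ℝ → ℝ) (hβcont : ContinuousOn β (Set.Icc 0 T)) (hβ0 : β 0 = 0)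
    (hHolder : ∀ s t : ℝ, 0 ≤ s → s ≤ t → t ≤ T → |β t - β s| ≤ M * (t - s) ^ δ)
    (W : ℝ → ℝ)
    (hW : ∀ t, W t =
      lam * (∫ s in (0:ℝ)..t, Real.exp (-lam * (t - s)) * (β t - β s))
        + Real.exp (-lam * t) * β t) :
    ∀ t ∈ Set.Icc (0:ℝ) T,
      |W t| ≤ lam ^ (-δ) * (Real.Gamma (δ + 1) + δ ^ δ * Real.exp (-δ)) * M :=
  stmt_0_general lam δ T M hlam hδ hT β hβ0 hHolder W hW
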